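/- Let W : ℝ² → [0,∞) be smooth and u = (u₁,u₂) : ℝ² → ℝ² a smooth solution of Δu_i = ∂W/∂u_i (i = 1,2) with ∂u_i/∂y > 0 and satisfying the equipartition ½(|∇u₁|² + |∇u₂|²) = W(u₁,u₂). Define v_i = (∂u_i/∂x)/(∂u_i/∂y). Then u_{1y}² ∂v₁/∂x + u_{2y}² ∂v₂/∂x = 0 and u_{1y}² ∂v₁/∂y + u_{2y}² ∂v₂/∂y = 0 on ℝ², and consequently det(∇v) = v_{1x}v_{2y} − v_{1y}v_{2x} = 0 everywhere. -/

import Mathlib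

noncomputable def pd {n : ℕ} (i : Fin n) (f : (Fin n → ℝ) → ℝ) (x : Fin n → ℝ) : ℝ :=
  fderiv ℝ f x (Pi.single i 1)

noncomputable def lap {n : ℕ} (f : (Fin n → ℝ) → ℝ) (x : Fin n → ℝ) : ℝ :=
  ∑ j, pd j (pd j f) x

private lemma clm_apply_fin2 (L : (Fin 2 → ℝ) →L[ℝ] ℝ) (w : Fin 2 → ℝ) :
    L w = w 0 * L (Pi.single 0 1) + w 1 * L (Pi.single 1 1) := by
  have hw : w = w 0 • (Pi.single 0 1 : Fin 2 → ℝ) + w 1 • (Pi.single 1 1 : Fin 2 → ℝ) := by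
    funext i; fin_cases i <;> simp
  conv_lhs => rw [hw]
  simp [smul_eq_mul]

private lemma contDiff_pd {f : (Fin 2 → ℝ) → ℝ} (hf : ContDiff ℝ (⊤ : ℕ∞) f) (j : Fin 2) :
    ContDiff ℝ (⊤ : ℕ∞) (pd j f) :=
  (hf.fderiv_right (by simp)).clm_apply contDiff_const

private lemma diff_pd {f : (Fin 2 → ℝ) → ℝ} (hf : ContDiff ℝ (⊤ : ℕ∞) f) (j : Fin 2)
    (x : Fin 2 → ℝ) : DifferentiableAt ℝ (pd j f) x :=
  ((contDiff_pd hf j).differentiable (by simp)).differentiableAt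

private lemma pd_comm {f : (Fin 2 → ℝ) → ℝ} (hf : ContDiff ℝ (⊤ : ℕ∞) f) (i j : Fin 2)
    (x : Fin 2 → ℝ) : pd i (pd j f) x = pd j (pd i f) x := by
  have hd : DifferentiableAt ℝ (fderiv ℝ f) x :=
    ((hf.fderiv_right (m := (⊤ : ℕ∞)) (by simp)).differentiable (by simp)).differentiableAt
  have key : ∀ a b : Fin 2, pd a (pd b f) x
      = fderiv ℝ (fderiv ℝ f) x (Pi.single a 1) (Pi.single b 1) := by
    intro a b
    show fderiv ℝ (fun y => fderiv ℝ f y (Pi.single b 1)) x (Pi.single a 1) = _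
    rw [fderiv_clm_apply hd (differentiableAt_const _)]
    simp
  rw [key, key]
  exact (hf.contDiffAt.isSymmSndFDerivAt (by simp [minSmoothness_of_isRCLikeNormedField]; exact WithTop.coe_le_coe.2 le_top)) _ _

private lemma pd_mul {f g : (Fin 2 → ℝ) → ℝ} {x : Fin 2 → ℝ} (hf : DifferentiableAt ℝ f x)
    (hg : DifferentiableAt ℝ g x) (j : Fin 2) :
    pd j (fun y => f y * g y) x = f x * pd j g x + g x * pd j f x := by
  show fderiv ℝ (fun y => f y * g y) x (Pi.single j 1) = _
  rw [fderiv_fun_mul hf hg]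
  simp [pd, mul_comm]

private lemma pd_add {f g : (Fin 2 → ℝ) → ℝ} {x : Fin 2 → ℝ} (hf : DifferentiableAt ℝ f x)
    (hg : DifferentiableAt ℝ g x) (j : Fin 2) :
    pd j (fun y => f y + g y) x = pd j f x + pd j g x := by
  show fderiv ℝ (fun y => f y + g y) x (Pi.single j 1) = _
  rw [fderiv_fun_add hf hg]
  simp [pd]

private lemma pd_const_mul {f : (Fin 2 → ℝ) → ℝ} {x : Fin 2 → ℝ} (hf : DifferentiableAt ℝ f x)
    (c : ℝ) (j : Fin 2) :
    pd j (fun y => c * f y) x = c * pd j f x := by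
  show fderiv ℝ (fun y => c * f y) x (Pi.single j 1) = _
  rw [fderiv_const_mul hf c]
  simp [pd]

private lemma pd_sq {f : (Fin 2 → ℝ) → ℝ} {x : Fin 2 → ℝ} (hf : DifferentiableAt ℝ f x)
    (j : Fin 2) : pd j (fun y => f y ^ 2) x = 2 * f x * pd j f x := by
  have h : (fun y => f y ^ 2) = fun y => f y * f y := by funext y; ring
  rw [h, pd_mul hf hf]
  ring

private lemma pd_energy {a b c d : (Fin 2 → ℝ) → ℝ} {x : Fin 2 → ℝ}
    (ha : DifferentiableAt ℝ a x) (hb : DifferentiableAt ℝ b x)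
    (hc : DifferentiableAt ℝ c x) (hd : DifferentiableAt ℝ d x) (j : Fin 2) :
    pd j (fun y => (1 / 2 : ℝ) * ((a y ^ 2 + b y ^ 2) + (c y ^ 2 + d y ^ 2))) x
      = a x * pd j a x + b x * pd j b x + c x * pd j c x + d x * pd j d x := by
  rw [pd_const_mul (((ha.fun_pow 2).fun_add (hb.fun_pow 2)).fun_add ((hc.fun_pow 2).fun_add (hd.fun_pow 2))) _ j,
    pd_add ((ha.fun_pow 2).fun_add (hb.fun_pow 2)) ((hc.fun_pow 2).fun_add (hd.fun_pow 2)) j,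
    pd_add (ha.fun_pow 2) (hb.fun_pow 2) j, pd_add (hc.fun_pow 2) (hd.fun_pow 2) j,
    pd_sq ha j, pd_sq hb j, pd_sq hc j, pd_sq hd j]
  ring

private lemma pd_comp2 {W u₁ u₂ : (Fin 2 → ℝ) → ℝ} (hW : ContDiff ℝ (⊤ : ℕ∞) W)
    (hu₁ : ContDiff ℝ (⊤ : ℕ∞) u₁) (hu₂ : ContDiff ℝ (⊤ : ℕ∞) u₂) (j : Fin 2) (x : Fin 2 → ℝ) :
    pd j (fun y => W ![u₁ y, u₂ y]) x
      = pd 0 W ![u₁ x, u₂ x] * pd j u₁ x + pd 1 W ![u₁ x, u₂ x] * pd j u₂ x := by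
  have hdu : ∀ i : Fin 2, DifferentiableAt ℝ ((![u₁, u₂] : Fin 2 → _) i) x := by
    intro i
    fin_cases i
    · exact (hu₁.differentiable (by simp)).differentiableAt
    · exact (hu₂.differentiable (by simp)).differentiableAt
  have hUeq : (fun y => (![u₁ y, u₂ y] : Fin 2 → ℝ)) = fun y i => (![u₁, u₂] : Fin 2 → _) i y := by
    funext y i; fin_cases i <;> simp
  have hdU : DifferentiableAt ℝ (fun y => (![u₁ y, u₂ y] : Fin 2 → ℝ)) x := by
    rw [hUeq]; exact differentiableAt_pi.2 hdu
  have hfd : fderiv ℝ (fun y => (![u₁ y, u₂ y] : Fin 2 → ℝ)) x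
      = ContinuousLinearMap.pi (fun i => fderiv ℝ ((![u₁, u₂] : Fin 2 → _) i) x) := by
    rw [hUeq]; exact fderiv_pi hdu
  have hcomp : fderiv ℝ (fun y => W ![u₁ y, u₂ y]) x
      = (fderiv ℝ W ![u₁ x, u₂ x]).comp (fderiv ℝ (fun y => (![u₁ y, u₂ y] : Fin 2 → ℝ)) x) := by
    have := fderiv_comp (𝕜 := ℝ) (g := W) (f := fun y => (![u₁ y, u₂ y] : Fin 2 → ℝ)) x
      ((hW.differentiable (by simp)).differentiableAt) hdU
    simpa [Function.comp_def] using this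
  show fderiv ℝ (fun y => W ![u₁ y, u₂ y]) x (Pi.single j 1) = _
  rw [hcomp]
  simp only [ContinuousLinearMap.comp_apply]
  rw [clm_apply_fin2, hfd]
  simp only [ContinuousLinearMap.pi_apply]
  simp [pd, mul_comm]

/-- Coordinates on `ℝ²`: `0 = x`, `1 = y`. -/
theorem stmt_16 (W : (Fin 2 → ℝ) → ℝ) (hW : ContDiff ℝ (⊤ : ℕ∞) W) (hWnonneg : ∀ q, 0 ≤ W q)
    (u₁ u₂ : (Fin 2 → ℝ) → ℝ) (hu₁ : ContDiff ℝ (⊤ : ℕ∞) u₁) (hu₂ : ContDiff ℝ (⊤ : ℕ∞) u₂)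
    (hAC₁ : ∀ x, lap u₁ x = pd 0 W ![u₁ x, u₂ x])
    (hAC₂ : ∀ x, lap u₂ x = pd 1 W ![u₁ x, u₂ x])
    (hm₁ : ∀ x, 0 < pd 1 u₁ x) (hm₂ : ∀ x, 0 < pd 1 u₂ x)
    (hequi : ∀ x, (1 / 2) * ((∑ j, (pd j u₁ x) ^ 2) + ∑ j, (pd j u₂ x) ^ 2)
        = W ![u₁ x, u₂ x])
    (v₁ v₂ : (Fin 2 → ℝ) → ℝ)
    (hv₁ : ∀ x, v₁ x = pd 0 u₁ x / pd 1 u₁ x)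
    (hv₂ : ∀ x, v₂ x = pd 0 u₂ x / pd 1 u₂ x) :
    (∀ x, (pd 1 u₁ x) ^ 2 * pd 0 v₁ x + (pd 1 u₂ x) ^ 2 * pd 0 v₂ x = 0) ∧
    (∀ x, (pd 1 u₁ x) ^ 2 * pd 1 v₁ x + (pd 1 u₂ x) ^ 2 * pd 1 v₂ x = 0) ∧
    (∀ x, pd 0 v₁ x * pd 1 v₂ x - pd 1 v₁ x * pd 0 v₂ x = 0) := by
  have hq₁ : ∀ x, pd 1 u₁ x ≠ 0 := fun x => (hm₁ x).ne'
  have hq₂ : ∀ x, pd 1 u₂ x ≠ 0 := fun x => (hm₂ x).ne'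
  have hv₁' : v₁ = fun y => pd 0 u₁ y / pd 1 u₁ y := funext hv₁
  have hv₂' : v₂ = fun y => pd 0 u₂ y / pd 1 u₂ y := funext hv₂
  subst hv₁' hv₂'
  -- differentiability of first partials
  have d10 : ∀ x, DifferentiableAt ℝ (pd 0 u₁) x := diff_pd hu₁ 0
  have d11 : ∀ x, DifferentiableAt ℝ (pd 1 u₁) x := diff_pd hu₁ 1
  have d20 : ∀ x, DifferentiableAt ℝ (pd 0 u₂) x := diff_pd hu₂ 0
  have d21 : ∀ x, DifferentiableAt ℝ (pd 1 u₂) x := diff_pd hu₂ 1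
  -- differentiability of the quotients
  have dv1 : ∀ x, DifferentiableAt ℝ (fun y => pd 0 u₁ y / pd 1 u₁ y) x := by
    intro x
    have h : (fun y => pd 0 u₁ y / pd 1 u₁ y) = fun y => pd 0 u₁ y * (pd 1 u₁ y)⁻¹ := by
      funext y; rw [div_eq_mul_inv]
    rw [h]; exact (d10 x).mul ((d11 x).inv (hq₁ x))
  have dv2 : ∀ x, DifferentiableAt ℝ (fun y => pd 0 u₂ y / pd 1 u₂ y) x := by
    intro x
    have h : (fun y => pd 0 u₂ y / pd 1 u₂ y) = fun y => pd 0 u₂ y * (pd 1 u₂ y)⁻¹ := by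
      funext y; rw [div_eq_mul_inv]
    rw [h]; exact (d20 x).mul ((d21 x).inv (hq₂ x))
  -- key quotient-rule identities
  have hrep₁ : (pd 0 u₁) = fun y => (pd 0 u₁ y / pd 1 u₁ y) * pd 1 u₁ y := by
    funext y; rw [div_mul_cancel₀ _ (hq₁ y)]
  have hrep₂ : (pd 0 u₂) = fun y => (pd 0 u₂ y / pd 1 u₂ y) * pd 1 u₂ y := by
    funext y; rw [div_mul_cancel₀ _ (hq₂ y)]
  have hV₁ : ∀ (j : Fin 2) x, (pd 1 u₁ x) ^ 2 * pd j (fun y => pd 0 u₁ y / pd 1 u₁ y) x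
      = pd 1 u₁ x * pd j (pd 0 u₁) x - pd 0 u₁ x * pd j (pd 1 u₁) x := by
    intro j x
    have h : pd j (pd 0 u₁) x
        = (pd 0 u₁ x / pd 1 u₁ x) * pd j (pd 1 u₁) x
          + pd 1 u₁ x * pd j (fun y => pd 0 u₁ y / pd 1 u₁ y) x := by
      conv_lhs => rw [hrep₁]
      exact pd_mul (dv1 x) (d11 x) j
    field_simp [hq₁ x] at h
    linear_combination -h
  have hV₂ : ∀ (j : Fin 2) x, (pd 1 u₂ x) ^ 2 * pd j (fun y => pd 0 u₂ y / pd 1 u₂ y) x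
      = pd 1 u₂ x * pd j (pd 0 u₂) x - pd 0 u₂ x * pd j (pd 1 u₂) x := by
    intro j x
    have h : pd j (pd 0 u₂) x
        = (pd 0 u₂ x / pd 1 u₂ x) * pd j (pd 1 u₂) x
          + pd 1 u₂ x * pd j (fun y => pd 0 u₂ y / pd 1 u₂ y) x := by
      conv_lhs => rw [hrep₂]
      exact pd_mul (dv2 x) (d21 x) j
    field_simp [hq₂ x] at h
    linear_combination -h
  -- differentiated equipartition
  have hEq : (fun y => (1 / 2 : ℝ) * (((pd 0 u₁ y) ^ 2 + (pd 1 u₁ y) ^ 2)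
      + ((pd 0 u₂ y) ^ 2 + (pd 1 u₂ y) ^ 2))) = fun y => W ![u₁ y, u₂ y] := by
    funext y
    rw [← hequi y]
    simp [Fin.sum_univ_two]
  have hE : ∀ (j : Fin 2) x,
      pd 0 u₁ x * pd j (pd 0 u₁) x + pd 1 u₁ x * pd j (pd 1 u₁) x
        + pd 0 u₂ x * pd j (pd 0 u₂) x + pd 1 u₂ x * pd j (pd 1 u₂) x
      = pd 0 W ![u₁ x, u₂ x] * pd j u₁ x + pd 1 W ![u₁ x, u₂ x] * pd j u₂ x := by
    intro j x
    rw [← pd_energy (d10 x) (d11 x) (d20 x) (d21 x) j, hEq]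
    exact pd_comp2 hW hu₁ hu₂ j x
  -- Allen–Cahn in expanded form
  have hA1 : ∀ x, pd 0 (pd 0 u₁) x + pd 1 (pd 1 u₁) x = pd 0 W ![u₁ x, u₂ x] := by
    intro x; have := hAC₁ x; simpa [lap, Fin.sum_univ_two] using this
  have hA2 : ∀ x, pd 0 (pd 0 u₂) x + pd 1 (pd 1 u₂) x = pd 1 W ![u₁ x, u₂ x] := by
    intro x; have := hAC₂ x; simpa [lap, Fin.sum_univ_two] using this
  -- symmetry of second derivatives
  have hS1 : ∀ x, pd 1 (pd 0 u₁) x = pd 0 (pd 1 u₁) x := fun x => pd_comm hu₁ 1 0 x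
  have hS2 : ∀ x, pd 1 (pd 0 u₂) x = pd 0 (pd 1 u₂) x := fun x => pd_comm hu₂ 1 0 x
  have goal1 : ∀ x, (pd 1 u₁ x) ^ 2 * pd 0 (fun y => pd 0 u₁ y / pd 1 u₁ y) x
      + (pd 1 u₂ x) ^ 2 * pd 0 (fun y => pd 0 u₂ y / pd 1 u₂ y) x = 0 := by
    intro x
    linear_combination hV₁ 0 x + hV₂ 0 x + pd 1 u₁ x * hA1 x + pd 1 u₂ x * hA2 x
      - hE 1 x + pd 0 u₁ x * hS1 x + pd 0 u₂ x * hS2 x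
  have goal2 : ∀ x, (pd 1 u₁ x) ^ 2 * pd 1 (fun y => pd 0 u₁ y / pd 1 u₁ y) x
      + (pd 1 u₂ x) ^ 2 * pd 1 (fun y => pd 0 u₂ y / pd 1 u₂ y) x = 0 := by
    intro x
    linear_combination hV₁ 1 x + hV₂ 1 x - pd 0 u₁ x * hA1 x - pd 0 u₂ x * hA2 x
      + hE 0 x + pd 1 u₁ x * hS1 x + pd 1 u₂ x * hS2 x
  refine ⟨goal1, goal2, ?_⟩
  intro x
  have h1 := goal1 x
  have h2 := goal2 x
  have e1 : pd 0 (fun y => pd 0 u₁ y / pd 1 u₁ y) x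
      = -((pd 1 u₂ x) ^ 2 * pd 0 (fun y => pd 0 u₂ y / pd 1 u₂ y) x) / (pd 1 u₁ x) ^ 2 := by
    field_simp [hq₁ x]
    linarith
  have e2 : pd 1 (fun y => pd 0 u₁ y / pd 1 u₁ y) x
      = -((pd 1 u₂ x) ^ 2 * pd 1 (fun y => pd 0 u₂ y / pd 1 u₂ y) x) / (pd 1 u₁ x) ^ 2 := by
    field_simp [hq₁ x]
    linarith
  rw [e1, e2]
  field_simp [hq₁ x]
  ring
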